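/- Let A be a partial pair which is not total and let U be a closed λ-term with ⟦U⟧^{G_Ā} ⊆ ⟦Ω⟧^{G_Ā} in the graph model G_Ā freely generated by A, where Ω = (λx.xx)(λx.xx). Then U is unsolvable. -/

import Mathlib

universe u v

/-- Untyped λ-terms in de Bruijn notation (over the countably infinite
supply of variables `ℕ`). -/
inductive Term : Type
  | var : ℕ → Term
  | app : Term → Term → Term
  | lam : Term → Term
  deriving DecidableEq

namespace Term

/-- Shift the free variables `≥ d` up by one. -/
def lift (d : ℕ) : Term → Term
  | var n => if n < d then var n else var (n + 1)
  | app M N => app (lift d M) (lift d N)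
  | lam M => lam (lift (d + 1) M)

/-- Capture-avoiding substitution of `N` for the free variable `k`. -/
def subst : Term → ℕ → Term → Term
  | var n, k, N => if n = k then N else if k < n then var (n - 1) else var n
  | app P Q, k, N => app (subst P k N) (subst Q k N)
  | lam P, k, N => lam (subst P (k + 1) (lift 0 N))

/-- One-step β-reduction. -/
inductive Step : Term → Term → Prop
  | beta (M N : Term) : Step (app (lam M) N) (subst M 0 N)
  | appL {M M' : Term} (N : Term) : Step M M' → Step (app M N) (app M' N)
  | appR (M : Term) {N N' : Term} : Step N N' → Step (app M N) (app M N')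
  | abs {M M' : Term} : Step M M' → Step (lam M) (lam M')

/-- β-conversion: the least equivalence relation containing one-step β-reduction. -/
inductive BetaConv : Term → Term → Prop
  | of {M N : Term} : Step M N → BetaConv M N
  | refl (M : Term) : BetaConv M M
  | symm {M N : Term} : BetaConv M N → BetaConv N M
  | trans {M N P : Term} : BetaConv M N → BetaConv N P → BetaConv M P

/-- All free variables are `< d`. -/
def BoundedBy : Term → ℕ → Prop
  | var n, d => n < d
  | app M N, d => BoundedBy M d ∧ BoundedBy N d
  | lam M, d => BoundedBy M (d + 1)

/-- Closed λ-terms. -/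
def Closed (M : Term) : Prop := BoundedBy M 0

/-- Terms of the form `y M₁ ⋯ Mₖ` (a variable applied to arguments). -/
inductive IsVarApp : Term → Prop
  | var (n : ℕ) : IsVarApp (var n)
  | app {M : Term} (N : Term) : IsVarApp M → IsVarApp (app M N)

/-- Head normal forms `λx₁…xₙ. y M₁ ⋯ Mₖ`. -/
inductive IsHnf : Term → Prop
  | head {M : Term} : IsVarApp M → IsHnf M
  | abs {M : Term} : IsHnf M → IsHnf (lam M)

/-- A λ-term is solvable if it is β-convertible to a head normal form. -/
def Solvable (M : Term) : Prop := ∃ N, BetaConv M N ∧ IsHnf N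

/-- Unsolvable λ-terms. -/
def Unsolvable (M : Term) : Prop := ¬ Solvable M

/-- β-normal forms: terms containing no β-redex. -/
def IsNormal : Term → Prop
  | var _ => True
  | lam M => IsNormal M
  | app M N => (∀ P, M ≠ lam P) ∧ IsNormal M ∧ IsNormal N

/-- A fixed effective bijective Gödel numbering of λ-terms. -/
def code : Term → ℕ
  | var n => 3 * n
  | app M N => 3 * Nat.pair (code M) (code N) + 1
  | lam M => 3 * code M + 2

/-- `δ = λx.xx`. -/
def delta : Term := lam (app (var 0) (var 0))

/-- `Ω = (λx.xx)(λx.xx)`. -/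
def Omega : Term := app delta delta

/-- `I = λx.x`. -/
def Idt : Term := lam (var 0)

end Term

open Term

/-- A set of λ-terms is r.e. if its set of Gödel codes is r.e. -/
def TermSetRe (V : Set Term) : Prop := REPred fun n : ℕ => ∃ M ∈ V, code M = n

/-- A set of λ-terms is co-r.e. if its set of Gödel codes is co-r.e.; since the
numbering is bijective this means that the code set of the complement is r.e. -/
def TermSetCoRe (V : Set Term) : Prop := TermSetRe Vᶜ

/-- β-co-r.e. sets: co-r.e. sets of λ-terms closed under β-conversion. -/
def BetaCoRe (V : Set Term) : Prop :=
  (∀ M N, M ∈ V → BetaConv M N → N ∈ V) ∧ TermSetCoRe V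

/-- A set of pairs of λ-terms is r.e. if the corresponding set of codes of
pairs is r.e. -/
def PairsRe (T : Set (Term × Term)) : Prop :=
  REPred fun n : ℕ => ∃ p ∈ T, Nat.pair (code p.1) (code p.2) = n

/-- λ-theories: congruences on Λ containing β-conversion. -/
def IsLambdaTheory (T : Term → Term → Prop) : Prop :=
  Equivalence T ∧
  (∀ M M' N N', T M M' → T N N' → T (Term.app M N) (Term.app M' N')) ∧
  (∀ M M', T M M' → T (Term.lam M) (Term.lam M')) ∧
  (∀ M N, BetaConv M N → T M N)

/-- Partial pairs (as raw data): a carrier set together with a partial map `j`,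
given as an `Option`-valued map on pairs of a subset and an element. -/
structure PrePair (α : Type u) : Type u where
  carrier : Set α
  j : Set α × α → Option α

namespace PrePair

variable {α : Type u}

/-- The defining conditions of a partial pair: the carrier is non-empty and `j`
is a partial injection `A* × A ⇀ A`. -/
def Valid (P : PrePair α) : Prop :=
  P.carrier.Nonempty ∧
  (∀ a x y, P.j (a, x) = some y →
      a.Finite ∧ a ⊆ P.carrier ∧ x ∈ P.carrier ∧ y ∈ P.carrier) ∧
  (∀ p q y, P.j p = some y → P.j q = some y → p = q)

/-- Total pairs: `j` is defined on every pair of a finite subset of the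
carrier and an element of the carrier. -/
def Total (P : PrePair α) : Prop :=
  ∀ a x, a.Finite → a ⊆ P.carrier → x ∈ P.carrier → ∃ y, P.j (a, x) = some y

/-- Webs of graph models: total pairs with infinite carrier. -/
def IsGraphModel (P : PrePair α) : Prop := P.Valid ∧ P.Total ∧ P.carrier.Infinite

/-- The subpair relation `A ⊑ B`. -/
def Subpair (P Q : PrePair α) : Prop :=
  P.carrier ⊆ Q.carrier ∧ ∀ p y, P.j p = some y → Q.j p = some y

end PrePair

/-- Consing a value onto an environment (de Bruijn style). -/
def envCons {α : Type u} (s : Set α) (ρ : ℕ → Set α) : ℕ → Set α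
  | 0 => s
  | n + 1 => ρ n

/-- The interpretation of a λ-term with respect to a partial pair and an
environment. -/
def interp {α : Type u} (P : PrePair α) : Term → (ℕ → Set α) → Set α
  | Term.var n, ρ => ρ n
  | Term.app M N, ρ =>
      {y | ∃ a : Set α, a.Finite ∧ a ⊆ interp P N ρ ∧
        ∃ z, P.j (a, y) = some z ∧ z ∈ interp P M ρ}
  | Term.lam M, ρ =>
      {y | ∃ (a : Set α) (x : α), a.Finite ∧ P.j (a, x) = some y ∧
        x ∈ interp P M (envCons a ρ)}

/-- The interpretation of a closed λ-term. -/
def interpC {α : Type u} (P : PrePair α) (M : Term) : Set α :=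
  interp P M fun _ => (∅ : Set α)

/-- The order theory of (the graph model generated by) a pair. -/
def ThLe {α : Type u} (P : PrePair α) : Set (Term × Term) :=
  {p | ∀ ρ : ℕ → Set α, (∀ n, ρ n ⊆ P.carrier) → interp P p.1 ρ ⊆ interp P p.2 ρ}

/-- The equational theory of (the graph model generated by) a pair. -/
def Th {α : Type u} (P : PrePair α) : Set (Term × Term) :=
  {p | ∀ ρ : ℕ → Set α, (∀ n, ρ n ⊆ P.carrier) → interp P p.1 ρ = interp P p.2 ρ}

/-- Morphisms of partial pairs. -/
def IsMorphism {α : Type u} {β : Type v} (P : PrePair α) (Q : PrePair β)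
    (f : α → β) : Prop :=
  Set.MapsTo f P.carrier Q.carrier ∧
  ∀ a x y, a ⊆ P.carrier → x ∈ P.carrier → P.j (a, x) = some y →
    Q.j (f '' a, f x) = some (f y)

/-- Isomorphisms of partial pairs: morphisms which are bijections between the
carriers and whose inverse is also a morphism. -/
def IsIso {α : Type u} {β : Type v} (P : PrePair α) (Q : PrePair β)
    (f : α → β) : Prop :=
  IsMorphism P Q f ∧
  ∃ g : β → α, IsMorphism Q P g ∧
    (∀ x ∈ P.carrier, g (f x) = x) ∧ ∀ y ∈ Q.carrier, f (g y) = y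

/-- The ambient type of the free completion: formal copies `base x` of the
original elements together with formal pairs `node`. -/
inductive FC (α : Type u) : Type u
  | base : α → FC α
  | node : List (FC α) → FC α → FC α

namespace FC

variable {α : Type u}

open scoped Classical

/-- A canonical list enumerating a finite set. -/
noncomputable def listOf (s : Set (FC α)) : List (FC α) :=
  if h : s.Finite then h.toFinset.toList else []

/-- The copy of the original carrier inside `FC α`. -/
def baseSet (P : PrePair α) : Set (FC α) := base '' P.carrier

/-- `(a, x)` is the copy of a pair in the domain of `j`. -/
def IsOldDom (P : PrePair α) (a : Set (FC α)) (x : FC α) : Prop :=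
  ∃ (a₀ : Set α) (x₀ : α), a = base '' a₀ ∧ x = base x₀ ∧ (P.j (a₀, x₀)).isSome

/-- The increasing stages `Aₙ` of the free completion:
`A₀ = A` and `A_{n+1} = A ∪ ((Aₙ* × Aₙ) ∖ dom j)`. -/
def stage (P : PrePair α) : ℕ → Set (FC α)
  | 0 => baseSet P
  | n + 1 => baseSet P ∪
      {t | ∃ (a : Set (FC α)) (x : FC α), a.Finite ∧ a ⊆ stage P n ∧
        x ∈ stage P n ∧ ¬ IsOldDom P a x ∧ t = node (listOf a) x}

/-- The carrier `Ā = ⋃ₙ Aₙ` of the free completion. -/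
def compCarrier (P : PrePair α) : Set (FC α) := ⋃ n, stage P n

/-- `y` is the copy of the old value `j (a₀, x₀)`, where `(a, x)` is the copy
of `(a₀, x₀) ∈ dom j`. -/
def OldVal (P : PrePair α) (a : Set (FC α)) (x y : FC α) : Prop :=
  ∃ (a₀ : Set α) (x₀ y₀ : α), a = base '' a₀ ∧ x = base x₀ ∧
    P.j (a₀, x₀) = some y₀ ∧ y = base y₀

/-- The total injection `j̄` of the free completion: it extends `j` and sends
every other pair `(a, α)` of the completion to (the formal copy of) itself. -/
noncomputable def jbar (P : PrePair α) (p : Set (FC α) × FC α) : Option (FC α) :=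
  if p.1.Finite ∧ p.1 ⊆ compCarrier P ∧ p.2 ∈ compCarrier P then
    if h : ∃ y, OldVal P p.1 p.2 y then some h.choose
    else some (node (listOf p.1) p.2)
  else none

end FC

/-- The free completion `Ā` of a partial pair `A`, as a total pair on `FC α`. -/
noncomputable def completion {α : Type u} (P : PrePair α) : PrePair (FC α) :=
  ⟨FC.compCarrier P, FC.jbar P⟩

/-- The fixed effective encoding of finite subsets of `ℕ`. -/
def encF (s : Finset ℕ) : ℕ := s.sum fun i => 2 ^ i

/-- A partial pair on `ℕ` whose carrier is a decidable set and whose map `j` is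
partial recursive with decidable domain (under the fixed effective encoding of
finite sets and pairs). -/
def ConcreteWE (Q : PrePair ℕ) : Prop :=
  ComputablePred (· ∈ Q.carrier) ∧
  ∃ f : ℕ →. ℕ, Nat.Partrec f ∧ ComputablePred (fun n => (f n).Dom) ∧
    ∀ (a : Finset ℕ) (x y : ℕ), Q.j (↑a, x) = some y ↔ y ∈ f (Nat.pair (encF a) x)

/-- The range of `j` is decidable. -/
def ConcreteRange (Q : PrePair ℕ) : Prop :=
  ComputablePred fun y => ∃ p, Q.j p = some y

/-- Weakly effective partial pairs: partial pairs isomorphic to a partial pair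
on `ℕ` with decidable carrier whose `j` is partial recursive with decidable
domain. -/
def WeaklyEffective {α : Type u} (P : PrePair α) : Prop :=
  ∃ Q : PrePair ℕ, ConcreteWE Q ∧ ∃ f : α → ℕ, IsIso P Q f

/-- Effective partial pairs: weakly effective via a pair whose `j` moreover has
decidable range. -/
def EffectivePair {α : Type u} (P : PrePair α) : Prop :=
  ∃ Q : PrePair ℕ, ConcreteWE Q ∧ ConcreteRange Q ∧ ∃ f : α → ℕ, IsIso P Q f

/-- Effective total pairs: total pairs isomorphic to some `(ℕ, ℓ)` with `ℓ`
total recursive, injective and with decidable range. -/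
def EffectiveTotalPair {α : Type u} (P : PrePair α) : Prop :=
  ∃ Q : PrePair ℕ, Q.carrier = Set.univ ∧
    (∃ f : ℕ → ℕ, Computable f ∧ Function.Injective f ∧
      ComputablePred (fun y => ∃ n, f n = y) ∧
      ∀ (a : Finset ℕ) (x : ℕ), Q.j (↑a, x) = some (f (Nat.pair (encF a) x))) ∧
    ∃ h : α → ℕ, IsIso P Q h

/-!
Every element of the free completion `Ā` is either (a copy of) an element of `A` or a new
formal pair `(a, β)`. The interpretation of `Ω` contains only old elements: if `β ∈ ⟦Ω⟧` were
new, then `j̄(c, β) ∈ ⟦δ⟧` for some `c ⊆ ⟦δ⟧`, and unfolding `⟦δ⟧` produces an element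
`j̄(c', β) ∈ c` of the same kind, strictly smaller as a formal term — an infinite descent.

On the other hand, since `A` is not total, `Ā` has new elements, and when every variable is
interpreted as the whole carrier, the interpretation of a head normal form `λx⃗. y M⃗` contains a
new element: `y M⃗` contains the whole carrier, and `j̄(a, β)` is new whenever `β` is. Since the
model is sound for β-conversion and `U` is closed, a solvable `U` would contain a new element.
-/

open FC

section Interp

variable {α : Type u} (P : PrePair α)

theorem envCons_mono {a b : Set α} {ρ σ : ℕ → Set α} (hab : a ⊆ b) (h : ρ ≤ σ) :
    envCons a ρ ≤ envCons b σ
  | 0 => hab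
  | n + 1 => h n

theorem le_envCons_head {s : Set α} {ρ σ : ℕ → Set α} (h : σ ≤ envCons s ρ) :
    σ ≤ envCons (σ 0) ρ
  | 0 => le_rfl
  | n + 1 => h (n + 1)

theorem interp_mono : ∀ M : Term, Monotone (interp P M)
  | .var n, _, _, h => h n
  | .app M N, _, _, h => by
      rintro y ⟨a, ha, haN, z, hj, hz⟩
      exact ⟨a, ha, haN.trans (interp_mono N h), z, hj, interp_mono M h hz⟩
  | .lam M, _, _, h => by
      rintro y ⟨a, x, ha, hj, hx⟩
      exact ⟨a, x, ha, hj, interp_mono M (envCons_mono subset_rfl h) hx⟩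

theorem interp_congr_of_boundedBy : ∀ (M : Term) {d : ℕ} {ρ σ : ℕ → Set α},
    BoundedBy M d → (∀ n < d, ρ n = σ n) → interp P M ρ = interp P M σ
  | .var n, _, _, _, hM, h => h n hM
  | .app M N, _, _, _, hM, h => by
      simp only [interp, interp_congr_of_boundedBy M hM.1 h, interp_congr_of_boundedBy N hM.2 h]
  | .lam M, _, ρ, σ, hM, h => by
      have hM' (a : Set α) : interp P M (envCons a ρ) = interp P M (envCons a σ) :=
        interp_congr_of_boundedBy M hM fun
          | 0, _ => rfl
          | n + 1, hn => h n (Nat.lt_of_succ_lt_succ hn)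
      simp only [interp, hM']

theorem interp_eq_interpC_of_closed {M : Term} (hM : Closed M) (ρ : ℕ → Set α) :
    interp P M ρ = interpC P M :=
  interp_congr_of_boundedBy P M hM fun n hn => absurd hn n.not_lt_zero

def insEnv (k : ℕ) (s : Set α) (ρ : ℕ → Set α) : ℕ → Set α :=
  fun n => if n < k then ρ n else if n = k then s else ρ (n - 1)

theorem insEnv_zero (s : Set α) (ρ : ℕ → Set α) : insEnv 0 s ρ = envCons s ρ := by
  funext n
  cases n <;> rfl

theorem envCons_insEnv (k : ℕ) (a s : Set α) (ρ : ℕ → Set α) :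
    envCons a (insEnv k s ρ) = insEnv (k + 1) s (envCons a ρ) := by
  funext n
  rcases n with _ | _ | m
  · rfl
  · cases k <;> rfl
  · simp only [envCons, insEnv, Nat.add_lt_add_iff_right, Nat.add_right_cancel_iff]
    split_ifs <;> rfl

theorem interp_lift : ∀ (N : Term) (d : ℕ) (s : Set α) (ρ : ℕ → Set α),
    interp P (Term.lift d N) (insEnv d s ρ) = interp P N ρ
  | .var n, d, s, ρ => by
      by_cases hn : n < d
      · simp [Term.lift, interp, insEnv, hn]
      · simp [Term.lift, interp, insEnv, hn, show ¬n + 1 < d by omega, show n + 1 ≠ d by omega]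
  | .app M N, d, s, ρ => by
      simp only [Term.lift, interp, interp_lift M d s ρ, interp_lift N d s ρ]
  | .lam M, d, s, ρ => by
      simp only [Term.lift, interp, envCons_insEnv, interp_lift M (d + 1)]

theorem interp_lift_zero (N : Term) (s : Set α) (ρ : ℕ → Set α) :
    interp P (Term.lift 0 N) (envCons s ρ) = interp P N ρ := by
  rw [← insEnv_zero, interp_lift]

theorem interp_subst : ∀ (M : Term) (k : ℕ) (N : Term) (ρ : ℕ → Set α),
    interp P (Term.subst M k N) ρ = interp P M (insEnv k (interp P N ρ) ρ)
  | .var n, k, N, ρ => by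
      rcases lt_trichotomy n k with hn | rfl | hn
      · simp [Term.subst, interp, insEnv, hn, hn.ne, hn.not_gt]
      · simp [Term.subst, interp, insEnv]
      · simp [Term.subst, interp, insEnv, hn, hn.ne', hn.not_gt]
  | .app M M', k, N, ρ => by
      simp only [Term.subst, interp, interp_subst M k N ρ, interp_subst M' k N ρ]
  | .lam M, k, N, ρ => by
      simp only [Term.subst, interp, interp_subst M (k + 1), interp_lift_zero, envCons_insEnv]

/-- Continuity of the interpretation. -/
theorem exists_finite_env_of_mem_interp : ∀ (M : Term) {ρ : ℕ → Set α} {x : α},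
    x ∈ interp P M ρ → ∃ σ ≤ ρ, (∀ n, (σ n).Finite) ∧ x ∈ interp P M σ
  | .var n, ρ, x, hx => by
      refine ⟨Function.update (fun _ => ∅) n {x}, fun m => ?_, fun m => ?_, by simp [interp]⟩
      · rcases eq_or_ne m n with rfl | hm
        · simpa [interp] using hx
        · simp [Function.update_of_ne hm]
      · rcases eq_or_ne m n with rfl | hm
        · simp
        · simp [Function.update_of_ne hm]
  | .app M N, ρ, y, ⟨b, hb, hbN, z, hj, hz⟩ => by
      obtain ⟨τ, hτρ, hτ, hzτ⟩ := exists_finite_env_of_mem_interp M hz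
      have hN (w : b) : ∃ σ ≤ ρ, (∀ n, (σ n).Finite) ∧ (w : α) ∈ interp P N σ :=
        exists_finite_env_of_mem_interp N (hbN w.2)
      choose σ hσρ hσ hwσ using hN
      have : Finite b := hb.to_subtype
      refine ⟨τ ⊔ ⨆ w, σ w, sup_le hτρ (iSup_le hσρ), fun n => ?_, b, hb, ?_, z, hj, ?_⟩
      · simp only [Pi.sup_apply, iSup_apply]
        exact (hτ n).union (Set.finite_iUnion fun w => hσ w n)
      · exact fun w hw => interp_mono P N (le_sup_of_le_right (le_iSup σ ⟨w, hw⟩)) (hwσ ⟨w, hw⟩)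
      · exact interp_mono P M le_sup_left hzτ
  | .lam M, ρ, y, ⟨b, x, hb, hj, hx⟩ => by
      obtain ⟨σ, hσρ, hσ, hxσ⟩ := exists_finite_env_of_mem_interp M hx
      refine ⟨fun n => σ (n + 1), fun n => hσρ (n + 1), fun n => hσ (n + 1), b, x, hb, hj, ?_⟩
      refine interp_mono P M (fun n => ?_) hxσ
      cases n
      exacts [hσρ 0, le_rfl]

end Interp

namespace FC

variable {α : Type u} {A : PrePair α}

theorem base_injective : Function.Injective (base : α → FC α) := fun _ _ => base.inj

theorem mem_listOf {s : Set (FC α)} (hs : s.Finite) {x : FC α} : x ∈ listOf s ↔ x ∈ s := by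
  rw [listOf, dif_pos hs, Finset.mem_toList, Set.Finite.mem_toFinset]

theorem IsOldDom.exists_oldVal {a : Set (FC α)} {x : FC α} (h : IsOldDom A a x) :
    ∃ y, OldVal A a x y := by
  obtain ⟨a₀, x₀, rfl, rfl, hj⟩ := h
  obtain ⟨y₀, hy₀⟩ := Option.isSome_iff_exists.1 hj
  exact ⟨base y₀, a₀, x₀, y₀, rfl, rfl, hy₀, rfl⟩

theorem jbar_domain {a : Set (FC α)} {x y : FC α} (h : jbar A (a, x) = some y) :
    a.Finite ∧ a ⊆ compCarrier A ∧ x ∈ compCarrier A := by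
  by_contra hc
  simp [jbar, hc] at h

theorem exists_jbar_eq_some {a : Set (FC α)} {x : FC α} (ha : a.Finite)
    (haC : a ⊆ compCarrier A) (hx : x ∈ compCarrier A) : ∃ y, jbar A (a, x) = some y := by
  unfold jbar
  split_ifs <;> simp_all

theorem jbar_cases {a : Set (FC α)} {x y : FC α} (h : jbar A (a, x) = some y) :
    OldVal A a x y ∨ (¬ IsOldDom A a x ∧ y = node (listOf a) x) := by
  rw [jbar, if_pos (jbar_domain h)] at h
  split_ifs at h with hold
  · exact .inl (Option.some_injective _ h ▸ hold.choose_spec)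
  · exact .inr ⟨fun h' => hold h'.exists_oldVal, (Option.some_injective _ h).symm⟩

theorem jbar_eq_some_base {a : Set (FC α)} {x : FC α} {y₀ : α}
    (h : jbar A (a, x) = some (base y₀)) :
    ∃ a₀ x₀, a = base '' a₀ ∧ x = base x₀ ∧ A.j (a₀, x₀) = some y₀ := by
  rcases jbar_cases h with ⟨a₀, x₀, y₁, ha, hx, hj, hy⟩ | ⟨-, hy⟩
  · exact ⟨a₀, x₀, ha, hx, base_injective hy ▸ hj⟩
  · cases hy

theorem jbar_eq_some_node {a : Set (FC α)} {x x' : FC α} {l : List (FC α)}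
    (h : jbar A (a, x) = some (node l x')) : l = listOf a ∧ x' = x := by
  rcases jbar_cases h with ⟨_, _, _, _, _, _, hy⟩ | ⟨-, hy⟩
  · cases hy
  · exact node.inj hy

theorem jbar_injective (hA : A.Valid) {p q : Set (FC α) × FC α} {y : FC α}
    (hp : jbar A p = some y) (hq : jbar A q = some y) : p = q := by
  obtain ⟨a, x⟩ := p
  obtain ⟨b, x'⟩ := q
  cases y with
  | base y₀ =>
      obtain ⟨a₀, x₀, rfl, rfl, hj⟩ := jbar_eq_some_base hp
      obtain ⟨b₀, x₁, rfl, rfl, hj'⟩ := jbar_eq_some_base hq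
      cases hA.2.2 _ _ _ hj hj'
      rfl
  | node l z =>
      obtain ⟨rfl, rfl⟩ := jbar_eq_some_node hp
      obtain ⟨hl, rfl⟩ := jbar_eq_some_node hq
      have hab : a = b := by
        ext w
        rw [← mem_listOf (jbar_domain hp).1, ← mem_listOf (jbar_domain hq).1, hl]
      rw [hab]

theorem stage_mono (A : PrePair α) : Monotone (stage A) := by
  refine monotone_nat_of_le_succ fun n => ?_
  induction n with
  | zero => exact Set.subset_union_left
  | succ n ih =>
      rintro t (ht | ⟨a, x, ha, haS, hx, hold, rfl⟩)
      · exact .inl ht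
      · exact .inr ⟨a, x, ha, haS.trans ih, ih hx, hold, rfl⟩

theorem base_mem_compCarrier {x : α} (hx : x ∈ A.carrier) : base x ∈ compCarrier A :=
  Set.mem_iUnion.2 ⟨0, x, hx, rfl⟩

theorem jbar_mem_compCarrier (hA : A.Valid) {a : Set (FC α)} {x y : FC α}
    (h : jbar A (a, x) = some y) : y ∈ compCarrier A := by
  obtain ⟨ha, haC, hx⟩ := jbar_domain h
  rcases jbar_cases h with ⟨a₀, x₀, y₀, -, -, hj, rfl⟩ | ⟨hold, rfl⟩
  · exact base_mem_compCarrier (hA.2.1 _ _ _ hj).2.2.2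
  · obtain ⟨m, hm⟩ := (stage_mono A).directed_le.exists_mem_subset_of_finset_subset_biUnion
      (s := (ha.insert x).toFinset) (by simpa [compCarrier] using Set.insert_subset hx haC)
    simp only [Set.Finite.coe_toFinset, Set.insert_subset_iff] at hm
    exact Set.mem_iUnion.2 ⟨m + 1, .inr ⟨a, x, ha, hm.2, hm.1, hold, rfl⟩⟩

theorem exists_mem_compCarrier_not_mem_range_base (hnt : ¬ A.Total) :
    ∃ t ∈ compCarrier A, t ∉ Set.range base := by
  simp only [PrePair.Total, not_forall, not_exists] at hnt
  obtain ⟨a₀, x₀, ha₀, ha₀A, hx₀, hj⟩ := hnt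
  refine ⟨node (listOf (base '' a₀)) (base x₀), Set.mem_iUnion.2 ⟨1, .inr ?_⟩, by simp⟩
  refine ⟨base '' a₀, base x₀, ha₀.image base, Set.image_mono ha₀A, ⟨x₀, hx₀, rfl⟩, ?_, rfl⟩
  rintro ⟨a₁, x₁, ha, hx, hsome⟩
  obtain rfl := (Set.image_injective.2 base_injective) ha.symm
  obtain rfl := base_injective hx.symm
  obtain ⟨y, hy⟩ := Option.isSome_iff_exists.1 hsome
  exact hj y hy

end FC

section Soundness

variable {α : Type u} {A : PrePair α}

theorem interp_completion_subset (hA : A.Valid) :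
    ∀ (M : Term) {ρ : ℕ → Set (FC α)}, (∀ n, ρ n ⊆ compCarrier A) →
      interp (completion A) M ρ ⊆ compCarrier A
  | .var n, _, hρ => hρ n
  | .app _ _, _, _ => fun _ ⟨_, _, _, _, hj, _⟩ => (jbar_domain hj).2.2
  | .lam _, _, _ => fun _ ⟨_, _, _, hj, _⟩ => jbar_mem_compCarrier hA hj

theorem envCons_subset {C a : Set (FC α)} {ρ : ℕ → Set (FC α)} (ha : a ⊆ C)
    (hρ : ∀ n, ρ n ⊆ C) : ∀ n, envCons a ρ n ⊆ C
  | 0 => ha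
  | n + 1 => hρ n

theorem interp_completion_app_lam (hA : A.Valid) (M N : Term) {ρ : ℕ → Set (FC α)}
    (hρ : ∀ n, ρ n ⊆ compCarrier A) :
    interp (completion A) (.app (.lam M) N) ρ = interp (completion A) (Term.subst M 0 N) ρ := by
  rw [interp_subst, insEnv_zero]
  ext y
  constructor
  · rintro ⟨a, -, haN, z, hj, b, x, -, hj', hx⟩
    obtain ⟨rfl, rfl⟩ := Prod.ext_iff.1 (jbar_injective hA hj hj')
    exact interp_mono _ M (envCons_mono haN le_rfl) hx
  · intro hy
    obtain ⟨σ, hσ, hσfin, hyσ⟩ := exists_finite_env_of_mem_interp _ M hy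
    have hσN : σ 0 ⊆ interp (completion A) N ρ := hσ 0
    have hyM := interp_mono _ M (le_envCons_head hσ) hyσ
    have hσC := hσN.trans (interp_completion_subset hA N hρ)
    obtain ⟨z, hz⟩ := exists_jbar_eq_some (hσfin 0) hσC
      (interp_completion_subset hA M (envCons_subset hσC hρ) hyM)
    exact ⟨σ 0, hσfin 0, hσN, z, hz, σ 0, y, hσfin 0, hz, hyM⟩

theorem interp_completion_eq_of_step (hA : A.Valid) {M N : Term} (h : Term.Step M N) :
    ∀ {ρ : ℕ → Set (FC α)}, (∀ n, ρ n ⊆ compCarrier A) →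
      interp (completion A) M ρ = interp (completion A) N ρ := by
  induction h with
  | beta M N => exact interp_completion_app_lam hA M N
  | appL N _ ih => exact fun hρ => by simp only [interp, ih hρ]
  | appR M _ ih => exact fun hρ => by simp only [interp, ih hρ]
  | abs _ ih =>
      intro ρ hρ
      ext y
      constructor <;> rintro ⟨a, x, ha, hj, hx⟩ <;> refine ⟨a, x, ha, hj, ?_⟩
      · rwa [← ih (envCons_subset (jbar_domain hj).2.1 hρ)]
      · rwa [ih (envCons_subset (jbar_domain hj).2.1 hρ)]

theorem interp_completion_eq_of_betaConv (hA : A.Valid) {M N : Term} (h : Term.BetaConv M N)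
    {ρ : ℕ → Set (FC α)} (hρ : ∀ n, ρ n ⊆ compCarrier A) :
    interp (completion A) M ρ = interp (completion A) N ρ := by
  induction h with
  | of hs => exact interp_completion_eq_of_step hA hs hρ
  | refl => rfl
  | symm _ ih => exact ih.symm
  | trans _ _ ih₁ ih₂ => exact ih₁.trans ih₂

end Soundness

section Omega

variable {α : Type u} {A : PrePair α}

theorem mem_range_base_of_jbar_mem_interp_delta (hA : A.Valid) {ρ : ℕ → Set (FC α)} :
    ∀ {y : FC α} {e : Set (FC α)} {β : FC α}, y ∈ interp (completion A) delta ρ →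
      e ⊆ interp (completion A) delta ρ → jbar A (e, β) = some y → β ∈ Set.range base
  | .base _, _, _, _, _, hj => by
      obtain ⟨_, x₀, -, rfl, -⟩ := jbar_eq_some_base hj
      exact ⟨x₀, rfl⟩
  | .node l x, e, β, hy, he, hj => by
      obtain ⟨a, x', -, hj', e', -, he'a, z, hz, hza⟩ := hy
      obtain ⟨rfl, rfl⟩ := Prod.ext_iff.1 (jbar_injective hA hj hj')
      have hzl : z ∈ l := (jbar_eq_some_node hj).1 ▸ (mem_listOf (jbar_domain hj).1).2 hza
      exact mem_range_base_of_jbar_mem_interp_delta hA (he hza) (he'a.trans he) hz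
termination_by y => sizeOf y
decreasing_by
  have := List.sizeOf_lt_of_mem hzl
  simp only [node.sizeOf_spec]
  omega

theorem interpC_completion_omega_subset_range_base (hA : A.Valid) :
    interpC (completion A) Omega ⊆ Set.range base :=
  fun _ ⟨_, _, hc, _, hj, hz⟩ => mem_range_base_of_jbar_mem_interp_delta hA hz hc hj

end Omega

section HeadNormalForms

variable {α : Type u} {A : PrePair α}

theorem compCarrier_subset_interp_of_isVarApp (hA : A.Valid) {M : Term} (hM : IsVarApp M)
    {ρ : ℕ → Set (FC α)} (hρ : ∀ n, compCarrier A ⊆ ρ n) :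
    compCarrier A ⊆ interp (completion A) M ρ := by
  induction hM with
  | var n => exact hρ n
  | app N _ ih =>
      intro t ht
      obtain ⟨z, hz⟩ := exists_jbar_eq_some Set.finite_empty (Set.empty_subset _) ht
      exact ⟨∅, Set.finite_empty, Set.empty_subset _, z, hz, ih (jbar_mem_compCarrier hA hz)⟩

theorem exists_mem_interp_not_mem_range_base_of_isHnf (hA : A.Valid) (hnt : ¬ A.Total)
    {N : Term} (hN : IsHnf N) :
    ∃ t ∈ interp (completion A) N (fun _ => compCarrier A), t ∉ Set.range base := by
  induction hN with
  | head hM =>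
      obtain ⟨t, ht, htb⟩ := exists_mem_compCarrier_not_mem_range_base hnt
      exact ⟨t, compCarrier_subset_interp_of_isVarApp hA hM (fun _ => subset_rfl) ht, htb⟩
  | @abs M _ ih =>
      obtain ⟨t, ht, htb⟩ := ih
      obtain ⟨σ, hσ, hσfin, htσ⟩ := exists_finite_env_of_mem_interp _ M ht
      have hσ' : σ ≤ envCons (σ 0) fun _ => compCarrier A
        | 0 => le_rfl
        | n + 1 => hσ (n + 1)
      have htM := interp_mono _ M hσ' htσ
      obtain ⟨t', ht'⟩ := exists_jbar_eq_some (hσfin 0) (hσ 0)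
        (interp_completion_subset hA M (fun _ => subset_rfl) ht)
      refine ⟨t', ⟨σ 0, t, hσfin 0, ht', htM⟩, ?_⟩
      rintro ⟨y₀, rfl⟩
      obtain ⟨_, x₀, -, rfl, -⟩ := jbar_eq_some_base ht'
      exact htb ⟨x₀, rfl⟩

end HeadNormalForms

/-- If `A` is a non-total partial pair and
`⟦U⟧ ⊆ ⟦Ω⟧` in the graph model freely generated by `A` for a closed term `U`,
then `U` is unsolvable. -/
theorem unsolvable_of_le_omega {α : Type u} (A : PrePair α) (hA : A.Valid)
    (hnt : ¬ A.Total) (U : Term) (hU : Term.Closed U)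
    (h : interpC (completion A) U ⊆ interpC (completion A) Term.Omega) :
    Term.Unsolvable U := by
  rintro ⟨N, hUN, hN⟩
  obtain ⟨t, htN, htb⟩ := exists_mem_interp_not_mem_range_base_of_isHnf hA hnt hN
  have htU : t ∈ interpC (completion A) U := by
    rwa [← interp_eq_interpC_of_closed _ hU (fun _ => compCarrier A),
      interp_completion_eq_of_betaConv hA hUN fun _ => subset_rfl]
  exact htb (interpC_completion_omega_subset_range_base hA (h htU))
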